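/- For 0 ≤ λ ≤ 1 and the regret measure V(X) = λ‖X₊‖₂ + (E(X))₊, the function y ↦ y + V(X − y) attains its minimum over ℝ at y = E(X), and the minimum value equals E(X) + λ‖(X − E(X))₊‖₂. Hence inf over y of { y + V(X−y) } recovers the mean-deviation-penalty risk measure R(X) = E(X) + λ‖(X − E(X))₊‖₂. -/

import Mathlib

/-!
Write `N y = ‖(X - y)₊‖₂` and `μ = E X`, so that `y + V(X - y) = y + λ N y + (μ - y)₊`.
For `y ≤ μ` this is `μ + λ N y`, and `N` is antitone. For `y ≥ μ` it is `y + λ N y`, and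
Minkowski's inequality with `(X - μ)₊ ≤ (X - y)₊ + (y - μ)` gives `N μ ≤ N y + (y - μ)`;
since `λ ≤ 1` the increase of `y` pays for the possible drop of `λ N`.
-/

open Finset

section WeightedL2Norm

variable {Ω : Type*} [Fintype Ω]

noncomputable def weightedL2Norm (p f : Ω → ℝ) : ℝ := √(∑ ω, p ω * f ω ^ 2)

variable {p : Ω → ℝ}

theorem weightedL2Norm_eq_norm (hp : ∀ ω, 0 ≤ p ω) (f : Ω → ℝ) :
    weightedL2Norm p f = ‖(WithLp.toLp 2 fun ω => √(p ω) * f ω : EuclideanSpace ℝ Ω)‖ := by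
  simp only [EuclideanSpace.norm_eq, Real.norm_eq_abs, sq_abs, mul_pow, Real.sq_sqrt (hp _)]
  rfl

theorem weightedL2Norm_add_le (hp : ∀ ω, 0 ≤ p ω) (f g : Ω → ℝ) :
    weightedL2Norm p (f + g) ≤ weightedL2Norm p f + weightedL2Norm p g := by
  simp only [weightedL2Norm_eq_norm hp, Pi.add_apply, mul_add]
  exact norm_add_le (WithLp.toLp 2 fun ω => √(p ω) * f ω : EuclideanSpace ℝ Ω)
    (WithLp.toLp 2 fun ω => √(p ω) * g ω)

theorem weightedL2Norm_le_of_nonneg_of_le (hp : ∀ ω, 0 ≤ p ω) {f g : Ω → ℝ} (hf : 0 ≤ f)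
    (hfg : f ≤ g) : weightedL2Norm p f ≤ weightedL2Norm p g :=
  Real.sqrt_le_sqrt <| sum_le_sum fun ω _ =>
    mul_le_mul_of_nonneg_left (pow_le_pow_left₀ (hf ω) (hfg ω) 2) (hp ω)

theorem weightedL2Norm_const (hsum : ∑ ω, p ω = 1) (c : ℝ) :
    weightedL2Norm p (fun _ => c) = |c| := by
  rw [weightedL2Norm, ← sum_mul, hsum, one_mul, Real.sqrt_sq_eq_abs]

theorem weightedL2Norm_posPart_sub_antitone (hp : ∀ ω, 0 ≤ p ω) (X : Ω → ℝ) :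
    Antitone fun y => weightedL2Norm p fun ω => max (X ω - y) 0 :=
  fun _ _ hyy' => weightedL2Norm_le_of_nonneg_of_le hp (fun _ => le_max_right _ _)
    fun ω => max_le_max_right 0 (by linarith)

theorem weightedL2Norm_posPart_sub_le (hp : ∀ ω, 0 ≤ p ω) (hsum : ∑ ω, p ω = 1)
    (X : Ω → ℝ) (y y' : ℝ) :
    (weightedL2Norm p fun ω => max (X ω - y) 0) ≤
      (weightedL2Norm p fun ω => max (X ω - y') 0) + |y' - y| := by
  have hpointwise : (fun ω => max (X ω - y) 0) ≤
      (fun ω => max (X ω - y') 0) + fun _ => |y' - y| := fun ω => by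
    have h := abs_max_sub_max_le_abs (X ω - y) (X ω - y') 0
    rw [show X ω - y - (X ω - y') = y' - y by ring] at h
    simp only [Pi.add_apply]
    linarith [le_abs_self (max (X ω - y) 0 - max (X ω - y') 0)]
  calc _ ≤ _ := weightedL2Norm_le_of_nonneg_of_le hp (fun _ => le_max_right _ _) hpointwise
    _ ≤ _ := weightedL2Norm_add_le hp _ _
    _ = _ := by rw [weightedL2Norm_const hsum, abs_abs]

theorem sum_mul_sub_const (hsum : ∑ ω, p ω = 1) (X : Ω → ℝ) (y : ℝ) :
    ∑ ω, p ω * (X ω - y) = ∑ ω, p ω * X ω - y := by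
  simp only [mul_sub, sum_sub_distrib, ← sum_mul, hsum, one_mul]

theorem mean_add_mul_weightedL2Norm_posPart_le (hp : ∀ ω, 0 ≤ p ω) (hsum : ∑ ω, p ω = 1)
    {lam : ℝ} (hlam0 : 0 ≤ lam) (hlam1 : lam ≤ 1) (X : Ω → ℝ) (y : ℝ) :
    let μ := ∑ ω, p ω * X ω
    let N := fun y : ℝ => weightedL2Norm p fun ω => max (X ω - y) 0
    μ + lam * N μ ≤ y + (lam * N y + max (μ - y) 0) := by
  intro μ N
  rcases le_total y μ with hyμ | hμy
  · have hN : lam * N μ ≤ lam * N y :=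
      mul_le_mul_of_nonneg_left (weightedL2Norm_posPart_sub_antitone hp X hyμ) hlam0
    rw [max_eq_left (sub_nonneg.mpr hyμ)]
    linarith
  · have hN : N μ ≤ N y + (y - μ) := by
      simpa [abs_of_nonneg (sub_nonneg.mpr hμy)] using
        weightedL2Norm_posPart_sub_le hp hsum X μ y
    rw [max_eq_right (sub_nonpos.mpr hμy)]
    nlinarith

end WeightedL2Norm

/-- For the regret measure `V(Z) = λ‖Z₊‖₂ + (E Z)₊`, the function
`y ↦ y + V(X - y)` attains its minimum at `y = E X`, with minimum value
`E X + λ‖(X - E X)₊‖₂` (the mean-deviation-penalty risk measure). -/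
theorem stmt10 {Ω : Type} [Fintype Ω] (p : Ω → ℝ) (hp : ∀ ω, 0 < p ω)
    (hsum : ∑ ω, p ω = 1) (lam : ℝ) (hlam0 : 0 ≤ lam) (hlam1 : lam ≤ 1)
    (V : (Ω → ℝ) → ℝ)
    (hV : ∀ Z : Ω → ℝ,
      V Z = lam * Real.sqrt (∑ ω, p ω * (max (Z ω) 0) ^ 2) +
        max (∑ ω, p ω * Z ω) 0)
    (X : Ω → ℝ) :
    (∀ y : ℝ,
      (∑ ω, p ω * X ω) + V (fun ω => X ω - ∑ ω', p ω' * X ω') ≤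
        y + V (fun ω => X ω - y)) ∧
    (∑ ω, p ω * X ω) + V (fun ω => X ω - ∑ ω', p ω' * X ω') =
      (∑ ω, p ω * X ω) +
        lam * Real.sqrt (∑ ω, p ω * (max (X ω - ∑ ω', p ω' * X ω') 0) ^ 2) ∧
    sInf (Set.range fun y : ℝ => y + V (fun ω => X ω - y)) =
      (∑ ω, p ω * X ω) +
        lam * Real.sqrt (∑ ω, p ω * (max (X ω - ∑ ω', p ω' * X ω') 0) ^ 2) := by
  have hp' : ∀ ω, 0 ≤ p ω := fun ω => (hp ω).le
  set μ := ∑ ω, p ω * X ω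
  have hV_sub (y : ℝ) : V (fun ω => X ω - y) =
      lam * weightedL2Norm p (fun ω => max (X ω - y) 0) + max (μ - y) 0 := by
    rw [hV, sum_mul_sub_const hsum]
    rfl
  have hmin : μ + V (fun ω => X ω - μ) =
      μ + lam * Real.sqrt (∑ ω, p ω * (max (X ω - μ) 0) ^ 2) := by
    rw [hV_sub, sub_self, max_self, add_zero]
    rfl
  have hle (y : ℝ) : μ + V (fun ω => X ω - μ) ≤ y + V (fun ω => X ω - y) := by
    rw [hV_sub, hV_sub, sub_self, max_self, add_zero]
    exact mean_add_mul_weightedL2Norm_posPart_le hp' hsum hlam0 hlam1 X y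
  have hleast : IsLeast (Set.range fun y => y + V (fun ω => X ω - y))
      (μ + V (fun ω => X ω - μ)) :=
    ⟨⟨μ, rfl⟩, by rintro _ ⟨y, rfl⟩; exact hle y⟩
  exact ⟨hle, hmin, hleast.csInf_eq.trans hmin⟩
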